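/- arXiv:2003.04595 — 2 statements merged into one kernel-verified Lean document; each statement's English description precedes it below -/
import Mathlib

section
/- Let H be a real Hilbert space and J : H → ℝ ∪ {+∞} be a proper, convex, lower semi-continuous, absolutely one-homogeneous functional. Let u ∈ N(J)^⊥ with ‖u‖ = 1 and 0 < J(u) < ∞, let 0 < α < J_*(u), and set v = prox_α^J(u). Then v ≠ 0 and the renormalized vector u⁺ = v/‖v‖ satisfies J(u⁺) ≤ J(u); equality holds if and only if λ u ∈ ∂J(u) for λ = J(u)/‖u‖² = J(u). In particular, along the proximal power method u^{k+1} = prox_{α(u^k)}^J(u^k)/‖prox_{α(u^k)}^J(u^k)‖ with parameters α(u^k) < J_*(u^k), the energy J(u^{k+1}) ≤ J(u^k) decreases. -/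
/-!
The optimality condition of `v = prox_α^J(u)` is `p := (u - v)/α ∈ ∂J(v)`. For an absolutely
one-homogeneous convex `J` this means `⟪p, v⟫ = J v` and `⟪p, ·⟫ ≤ J`. If `v = 0`, then
`⟪u, ·⟫/α ≤ J` forces `J_*(u) ≤ α`, so `v ≠ 0`. Testing `⟪p, ·⟫ ≤ J` at `u` gives
`(‖v‖ - ⟪u, v⟫)(1 + ‖v‖) ≤ α (‖v‖ J u - J v)`, so `J v ≤ ‖v‖ J u` by Cauchy–Schwarz, with equality
only if `v = ‖v‖ u`; then `p ∈ ∂J(u)` and `⟪p, u⟫ = J u` identify `p = J(u) u`. Conversely, if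
`J(u) u ∈ ∂J(u)`, then `J_*(u) ≤ 1/J(u)`, so `w = (1 - α J u) u` is a positive multiple of `u`
with `(u - w)/α = J(u) u ∈ ∂J(w)`; monotonicity of `∂J` makes the resolvent single-valued, so
`v = w`.
-/

open scoped RealInnerProductSpace

noncomputable section

variable {H : Type*} [NormedAddCommGroup H] [InnerProductSpace ℝ H] [CompleteSpace H]

/-- `J` is absolutely one-homogeneous: `J (c • u) = |c| * J u` for `c ≠ 0`, and `J 0 = 0`. -/
def AbsOneHom (J : H → EReal) : Prop :=
  J 0 = 0 ∧ ∀ c : ℝ, c ≠ 0 → ∀ u : H, J (c • u) = ((|c| : ℝ) : EReal) * J u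

/-- Convexity of an extended-real-valued functional. -/
def ConvexFn (J : H → EReal) : Prop :=
  ∀ x y : H, ∀ t : ℝ, 0 ≤ t → t ≤ 1 →
    J (t • x + (1 - t) • y) ≤ ((t : ℝ) : EReal) * J x + (((1 - t) : ℝ) : EReal) * J y

/-- `J` is proper: it never takes the value `⊥` and is not identically `⊤`. -/
def ProperFn (J : H → EReal) : Prop := (∀ u : H, J u ≠ ⊥) ∧ ∃ u : H, J u ≠ ⊤

/-- `u` is orthogonal to the null space `N(J) = {n : J n = 0}` of `J`. -/
def InNullPerp (J : H → EReal) (u : H) : Prop := ∀ n : H, J n = 0 → ⟪u, n⟫ = 0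

/-- The objective `v ↦ ½‖v - u‖² + α J(v)` of the proximal problem for `J`. -/
def ProxObj (J : H → EReal) (α : ℝ) (u v : H) : EReal :=
  (((2 : ℝ)⁻¹ * ‖v - u‖ ^ 2 : ℝ) : EReal) + (α : EReal) * J v

/-- `v` is a minimizer of `w ↦ ½‖w - u‖² + α J(w)`, i.e. `v = prox_α^J(u)`
(the minimizer is unique by strict convexity). -/
def IsProxPt (J : H → EReal) (α : ℝ) (u v : H) : Prop :=
  ∀ w : H, ProxObj J α u v ≤ ProxObj J α u w

/-- The dual quantity `J_*(u) = sup { ⟪u,p⟫ / J(p) : p ∈ N(J)^⊥, J(p) > 0 }`. -/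
def Jdual (J : H → EReal) (u : H) : EReal :=
  ⨆ p : {p : H // InNullPerp J p ∧ 0 < J p}, ((⟪u, (p : H)⟫ : ℝ) : EReal) / J (p : H)

/-- `p` belongs to the subdifferential `∂J(u)`. -/
def InSubdiff (J : H → EReal) (u p : H) : Prop :=
  ∀ v : H, J u + ((⟪p, v - u⟫ : ℝ) : EReal) ≤ J v

open Filter Topology

lemma nonneg_of_forall_add_mul_nonneg {X K : ℝ} (h : ∀ t ∈ Set.Ioc (0 : ℝ) 1, 0 ≤ X + t * K) :
    0 ≤ X := by
  have hcont : Continuous fun t : ℝ => X + t * K := by fun_prop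
  have hlim : Tendsto (fun t : ℝ => X + t * K) (𝓝[>] 0) (𝓝 X) := by
    simpa using (hcont.tendsto 0).mono_left nhdsWithin_le_nhds
  exact ge_of_tendsto hlim (mem_of_superset (Ioc_mem_nhdsGT one_pos) h)

section

variable {E : Type*} [NormedAddCommGroup E] {J : E → EReal}

lemma IsProxPt.apply_ne_top {u v : E} {α : ℝ} (hv : IsProxPt J α u v) (hα : 0 < α) {r : ℝ}
    (hr : J u = r) : J v ≠ ⊤ := by
  intro htop
  have h := hv u
  rw [ProxObj, ProxObj, htop, hr, EReal.mul_top_of_pos (EReal.coe_pos.2 hα),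
    EReal.coe_add_top, top_le_iff] at h
  exact EReal.add_ne_top (EReal.coe_ne_top _) (EReal.coe_mul α r ▸ EReal.coe_ne_top _) h

variable [InnerProductSpace ℝ E]

namespace AbsOneHom

lemma apply_smul_of_nonneg (hJ : AbsOneHom J) {c : ℝ} (hc : 0 ≤ c) (u : E) :
    J (c • u) = (c : EReal) * J u := by
  rcases hc.eq_or_lt with rfl | hc
  · simp [hJ.1]
  · rw [hJ.2 c hc.ne' u, abs_of_pos hc]

/-- `J u = J (-u)`, so convexity at the midpoint `0` gives `0 = J 0 ≤ J u`. -/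
lemma nonneg (hJ : AbsOneHom J) (hconv : ConvexFn J) (u : E) : 0 ≤ J u := by
  have hmid := hconv u (-u) 2⁻¹ (by norm_num) (by norm_num)
  have hsym : J (-u) = J u := by
    simpa using hJ.2 (-1) (by norm_num) u
  rw [show (2⁻¹ : ℝ) • u + (1 - 2⁻¹ : ℝ) • -u = 0 by module, hJ.1, hsym,
    show (1 - 2⁻¹ : ℝ) = 2⁻¹ by norm_num] at hmid
  generalize J u = x at hmid ⊢
  induction x using EReal.rec with
  | bot =>
    rw [EReal.coe_mul_bot_of_pos (by norm_num)] at hmid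
    simp at hmid
  | top => exact le_top
  | coe r =>
    rw [← EReal.coe_mul, ← EReal.coe_add, EReal.coe_nonneg] at hmid
    exact EReal.coe_nonneg.2 (by linarith)

lemma ne_bot (hJ : AbsOneHom J) (hconv : ConvexFn J) (u : E) : J u ≠ ⊥ :=
  ne_bot_of_le_ne_bot EReal.zero_ne_bot (hJ.nonneg hconv u)

lemma exists_eq_coe (hJ : AbsOneHom J) (hconv : ConvexFn J) {u : E} (hu : J u ≠ ⊤) :
    ∃ r : ℝ, J u = r :=
  ⟨_, (EReal.coe_toReal hu (hJ.ne_bot hconv u)).symm⟩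

lemma inSubdiff_iff (hJ : AbsOneHom J) {u p : E} {r : ℝ} (hr : J u = r) :
    InSubdiff J u p ↔ ⟪p, u⟫ = r ∧ ∀ w, ((⟪p, w⟫ : ℝ) : EReal) ≤ J w := by
  have shift : ∀ w, J u + ((⟪p, w - u⟫ : ℝ) : EReal) = ((r - ⟪p, u⟫ + ⟪p, w⟫ : ℝ) : EReal) := by
    intro w
    rw [hr, inner_sub_right, ← EReal.coe_add]
    ring_nf
  constructor
  · intro h
    have h0 := h 0
    have h2 := h ((2 : ℝ) • u)
    rw [shift, hJ.1, inner_zero_right, ← EReal.coe_zero, EReal.coe_le_coe_iff] at h0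
    rw [shift, hJ.apply_smul_of_nonneg zero_le_two, hr, ← EReal.coe_mul,
      EReal.coe_le_coe_iff, real_inner_smul_right] at h2
    have hpu : ⟪p, u⟫ = r := by linarith
    refine ⟨hpu, fun w => ?_⟩
    simpa [shift, hpu] using h w
  · rintro ⟨hpu, hp⟩ w
    simpa [shift, hpu] using hp w

lemma inSubdiff_smul (hJ : AbsOneHom J) {u p : E} {r c : ℝ} (hr : J u = r) (hc : 0 < c)
    (h : InSubdiff J u p) : InSubdiff J (c • u) p := by
  have hcr : J (c • u) = ((c * r : ℝ) : EReal) := by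
    rw [hJ.apply_smul_of_nonneg hc.le, hr, EReal.coe_mul]
  obtain ⟨hpu, hp⟩ := (hJ.inSubdiff_iff hr).1 h
  exact (hJ.inSubdiff_iff hcr).2 ⟨by rw [real_inner_smul_right, hpu], hp⟩

end AbsOneHom

lemma jdual_le_inv_of_forall_inner_le {u : E} {c : ℝ} (hc : 0 < c)
    (h : ∀ w, ((⟪c • u, w⟫ : ℝ) : EReal) ≤ J w) : Jdual J u ≤ ((c⁻¹ : ℝ) : EReal) := by
  refine iSup_le fun ⟨p, _, hp⟩ => ?_
  change ((⟪u, p⟫ : ℝ) : EReal) / J p ≤ _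
  by_cases htop : J p = ⊤
  · simpa [htop, EReal.div_top] using hc.le
  obtain ⟨b, hb⟩ : ∃ b : ℝ, J p = b := ⟨_, (EReal.coe_toReal htop (ne_bot_of_gt hp)).symm⟩
  have hcb := h p
  rw [hb] at hp hcb ⊢
  rw [real_inner_smul_left, EReal.coe_le_coe_iff] at hcb
  rw [← EReal.coe_div, EReal.coe_le_coe_iff, div_le_iff₀ (EReal.coe_pos.1 hp),
    inv_mul_eq_div, le_div_iff₀ hc]
  linarith

lemma mul_lt_one_of_inSubdiff_smul (hJ : AbsOneHom J) {u : E} {α r : ℝ}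
    (hαu : (α : EReal) < Jdual J u) (hr0 : 0 < r) (hr : J u = r) (hsub : InSubdiff J u (r • u)) :
    α * r < 1 := by
  have h := hαu.trans_le (jdual_le_inv_of_forall_inner_le hr0 ((hJ.inSubdiff_iff hr).1 hsub).2)
  rw [EReal.coe_lt_coe_iff] at h
  simpa [inv_mul_cancel₀ hr0.ne'] using mul_lt_mul_of_pos_right h hr0

lemma eq_of_inSubdiff_inv_smul_sub {u v w : E} {α a b : ℝ} (hα : 0 < α) (ha : J v = a)
    (hb : J w = b) (hv : InSubdiff J v (α⁻¹ • (u - v))) (hw : InSubdiff J w (α⁻¹ • (u - w))) :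
    v = w := by
  have hvw := hv w
  have hwv := hw v
  rw [ha, hb, ← EReal.coe_add, EReal.coe_le_coe_iff] at hvw hwv
  have hsum : ⟪u - v, w - v⟫ + ⟪u - w, v - w⟫ = ‖w - v‖ ^ 2 := by
    rw [← neg_sub w v, inner_neg_right, ← sub_eq_add_neg, ← inner_sub_left,
      sub_sub_sub_cancel_left, real_inner_self_eq_norm_sq]
  rw [real_inner_smul_left] at hvw hwv
  have hle : α⁻¹ * ‖w - v‖ ^ 2 ≤ 0 := by
    rw [← hsum, mul_add]
    linarith
  have : ‖w - v‖ ^ 2 = 0 :=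
    le_antisymm (nonpos_of_mul_nonpos_right hle (inv_pos.2 hα)) (sq_nonneg _)
  simpa [sub_eq_zero, eq_comm] using this

namespace IsProxPt

variable {u v : E} {α : ℝ}

lemma inSubdiff (hv : IsProxPt J α u v) (hconv : ConvexFn J) (hbot : ∀ w, J w ≠ ⊥) (hα : 0 < α)
    {s : ℝ} (hs : J v = s) : InSubdiff J v (α⁻¹ • (u - v)) := by
  have hmin : ∀ w (b : ℝ), J w = b → 2⁻¹ * ‖v - u‖ ^ 2 + α * s ≤ 2⁻¹ * ‖w - u‖ ^ 2 + α * b := by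
    intro w b hb
    have h := hv w
    simp only [ProxObj, hs, hb] at h
    exact_mod_cast h
  intro w
  by_cases htop : J w = ⊤
  · simp [htop]
  obtain ⟨b, hb⟩ : ∃ b : ℝ, J w = b := ⟨_, (EReal.coe_toReal htop (hbot w)).symm⟩
  rw [hs, hb, ← EReal.coe_add, EReal.coe_le_coe_iff, real_inner_smul_left]
  suffices h : 0 ≤ ⟪v - u, w - v⟫ + α * (b - s) by
    have key : ⟪u - v, w - v⟫ ≤ α * (b - s) := by
      rw [← neg_sub v u, inner_neg_left]
      linarith
    linarith [(inv_mul_le_iff₀ hα).2 key]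
  -- compare with the objective along the segment from `v` to `w` and let the step go to `0`
  refine nonneg_of_forall_add_mul_nonneg (K := 2⁻¹ * ‖w - v‖ ^ 2) fun t ⟨ht0, ht1⟩ => ?_
  have hconvt : J (t • w + (1 - t) • v) ≤ ((t * b + (1 - t) * s : ℝ) : EReal) := by
    have h := hconv w v t ht0.le ht1
    rwa [hb, hs, ← EReal.coe_mul, ← EReal.coe_mul, ← EReal.coe_add] at h
  obtain ⟨c, hc⟩ : ∃ c : ℝ, J (t • w + (1 - t) • v) = c :=
    ⟨_, (EReal.coe_toReal (ne_top_of_le_ne_top (EReal.coe_ne_top _) hconvt) (hbot _)).symm⟩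
  rw [hc, EReal.coe_le_coe_iff] at hconvt
  have ht := hmin _ c hc
  rw [show t • w + (1 - t) • v - u = (v - u) + t • (w - v) by module, norm_add_sq_real,
    real_inner_smul_right, norm_smul, mul_pow, Real.norm_eq_abs, sq_abs] at ht
  have h : 0 ≤ t * (⟪v - u, w - v⟫ + α * (b - s) + t * (2⁻¹ * ‖w - v‖ ^ 2)) := by
    nlinarith [mul_le_mul_of_nonneg_left hconvt hα.le]
  exact (mul_nonneg_iff_of_pos_left ht0).1 h

lemma ne_zero (hv : IsProxPt J α u v) (hconv : ConvexFn J) (hJ : AbsOneHom J) (hα : 0 < α)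
    (hαu : (α : EReal) < Jdual J u) : v ≠ 0 := by
  rintro rfl
  have h0 : J 0 = ((0 : ℝ) : EReal) := hJ.1
  have hp := hv.inSubdiff hconv (hJ.ne_bot hconv) hα h0
  rw [sub_zero] at hp
  have hdual := jdual_le_inv_of_forall_inner_le (inv_pos.2 hα) ((hJ.inSubdiff_iff h0).1 hp).2
  rw [inv_inv] at hdual
  exact hαu.not_ge hdual

lemma norm_sub_inner_mul_le (hv : IsProxPt J α u v) (hconv : ConvexFn J) (hJ : AbsOneHom J)
    (hα : 0 < α) (hu : ‖u‖ = 1) {r s : ℝ} (hr : J u = r) (hs : J v = s) :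
    (‖v‖ - ⟪u, v⟫) * (1 + ‖v‖) ≤ α * (‖v‖ * r - s) := by
  obtain ⟨hpv, hp⟩ :=
    (hJ.inSubdiff_iff hs).1 (hv.inSubdiff hconv (hJ.ne_bot hconv) hα hs)
  have hpu := hp u
  rw [hr, EReal.coe_le_coe_iff] at hpu
  rw [real_inner_smul_left, inner_sub_left, real_inner_self_eq_norm_sq] at hpv hpu
  rw [hu, real_inner_comm, one_pow, inv_mul_le_iff₀ hα] at hpu
  have hvs : ⟪u, v⟫ - ‖v‖ ^ 2 = α * s := by
    rw [← hpv]
    field_simp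
  nlinarith [mul_le_mul_of_nonneg_left hpu (norm_nonneg v)]

lemma energy_le (hv : IsProxPt J α u v) (hconv : ConvexFn J) (hJ : AbsOneHom J) (hα : 0 < α)
    (hu : ‖u‖ = 1) (hu_top : J u ≠ ⊤) : J (‖v‖⁻¹ • v) ≤ J u := by
  obtain ⟨r, hr⟩ := hJ.exists_eq_coe hconv hu_top
  obtain ⟨s, hs⟩ := hJ.exists_eq_coe hconv (hv.apply_ne_top hα hr)
  have key := hv.norm_sub_inner_mul_le hconv hJ hα hu hr hs
  have hcs : ⟪u, v⟫ ≤ ‖v‖ := by simpa [hu] using real_inner_le_norm u v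
  have hsr : s ≤ ‖v‖ * r := by nlinarith [norm_nonneg v]
  have hr0 : 0 ≤ r := EReal.coe_nonneg.1 (hr ▸ hJ.nonneg hconv u)
  rw [hJ.apply_smul_of_nonneg (inv_nonneg.2 (norm_nonneg v)), hr, hs, ← EReal.coe_mul,
    EReal.coe_le_coe_iff]
  exact inv_mul_le_of_le_mul₀ (norm_nonneg v) hr0 hsr

lemma inSubdiff_of_energy_eq (hv : IsProxPt J α u v) (hconv : ConvexFn J) (hJ : AbsOneHom J)
    (hα : 0 < α) (hαu : (α : EReal) < Jdual J u) (hu : ‖u‖ = 1) {r : ℝ} (hr : J u = r)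
    (heq : J (‖v‖⁻¹ • v) = J u) : InSubdiff J u (r • u) := by
  obtain ⟨s, hs⟩ := hJ.exists_eq_coe hconv (hv.apply_ne_top hα hr)
  have hn : 0 < ‖v‖ := norm_pos_iff.2 (hv.ne_zero hconv hJ hα hαu)
  rw [hJ.apply_smul_of_nonneg (inv_nonneg.2 hn.le), hr, hs, ← EReal.coe_mul,
    EReal.coe_eq_coe_iff, inv_mul_eq_iff_eq_mul₀ hn.ne'] at heq
  have key := hv.norm_sub_inner_mul_le hconv hJ hα hu hr hs
  have hcs : ⟪u, v⟫ ≤ ‖v‖ := by simpa [hu] using real_inner_le_norm u v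
  have hinner : ⟪u, v⟫ = ‖u‖ * ‖v‖ := by
    rw [hu, one_mul]
    nlinarith
  have hvu : ‖v‖ • u = v := by simpa [hu] using inner_eq_norm_mul_iff_real.1 hinner
  set n := ‖v‖
  have hpu : InSubdiff J u (α⁻¹ • (u - v)) := by
    have hp := hv.inSubdiff hconv (hJ.ne_bot hconv) hα hs
    simpa [← hvu, smul_smul, inv_mul_cancel₀ hn.ne'] using
      hJ.inSubdiff_smul hs (inv_pos.2 hn) hp
  have hp_eq : α⁻¹ • (u - v) = (α⁻¹ * (1 - n)) • u := by
    rw [← hvu]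
    module
  have hcoef := ((hJ.inSubdiff_iff hr).1 hpu).1
  rw [hp_eq, real_inner_smul_left, real_inner_self_eq_norm_sq, hu, one_pow, mul_one] at hcoef
  rwa [hp_eq, hcoef] at hpu

lemma eq_smul_of_inSubdiff (hv : IsProxPt J α u v) (hconv : ConvexFn J) (hJ : AbsOneHom J)
    (hα : 0 < α) {r : ℝ} (hr : J u = r) (hc : 0 < 1 - α * r) (hsub : InSubdiff J u (r • u)) :
    v = (1 - α * r) • u := by
  obtain ⟨s, hs⟩ := hJ.exists_eq_coe hconv (hv.apply_ne_top hα hr)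
  have hw : InSubdiff J ((1 - α * r) • u) (α⁻¹ • (u - (1 - α * r) • u)) := by
    rw [show u - (1 - α * r) • u = (α * r) • u by module, smul_smul,
      inv_mul_cancel_left₀ hα.ne']
    exact hJ.inSubdiff_smul hr hc hsub
  have hJw : J ((1 - α * r) • u) = (((1 - α * r) * r : ℝ) : EReal) := by
    rw [hJ.apply_smul_of_nonneg hc.le, hr, EReal.coe_mul]
  exact eq_of_inSubdiff_inv_smul_sub hα hs hJw (hv.inSubdiff hconv (hJ.ne_bot hconv) hα hs) hw

lemma energy_eq_iff (hv : IsProxPt J α u v) (hconv : ConvexFn J) (hJ : AbsOneHom J) (hα : 0 < α)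
    (hαu : (α : EReal) < Jdual J u) (hu : ‖u‖ = 1) (hu_pos : 0 < J u) (hu_top : J u ≠ ⊤) :
    J (‖v‖⁻¹ • v) = J u ↔ InSubdiff J u ((J u).toReal • u) := by
  obtain ⟨r, hr⟩ := hJ.exists_eq_coe hconv hu_top
  have hr0 : 0 < r := EReal.coe_pos.1 (hr ▸ hu_pos)
  rw [show (J u).toReal = r by simp [hr]]
  refine ⟨hv.inSubdiff_of_energy_eq hconv hJ hα hαu hu hr, fun hsub => ?_⟩
  have hc : 0 < 1 - α * r := sub_pos.2 (mul_lt_one_of_inSubdiff_smul hJ hαu hr0 hr hsub)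
  rw [hv.eq_smul_of_inSubdiff hconv hJ hα hr hc hsub, norm_smul, hu, mul_one,
    Real.norm_of_nonneg hc.le, smul_smul, inv_mul_cancel₀ hc.ne', one_smul]

end IsProxPt

end

theorem energy_decrease_of_proximal_power_method_general
    (J : H → EReal) (hconv : ConvexFn J) (hhom : AbsOneHom J) :
    (∀ (u : H), InNullPerp J u → ‖u‖ = 1 → 0 < J u → J u ≠ ⊤ →
      ∀ (α : ℝ), 0 < α → (α : EReal) < Jdual J u →
      ∀ (v : H), IsProxPt J α u v →
        v ≠ 0 ∧ J (‖v‖⁻¹ • v) ≤ J u ∧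
        (J (‖v‖⁻¹ • v) = J u ↔ InSubdiff J u (((J u).toReal / ‖u‖ ^ 2) • u))) ∧
    (∀ (useq vseq : ℕ → H) (αseq : ℕ → ℝ),
      (∀ k, InNullPerp J (useq k)) → (∀ k, ‖useq k‖ = 1) →
      (∀ k, 0 < J (useq k)) → (∀ k, J (useq k) ≠ ⊤) →
      (∀ k, 0 < αseq k) → (∀ k, (αseq k : EReal) < Jdual J (useq k)) →
      (∀ k, IsProxPt J (αseq k) (useq k) (vseq k)) →
      (∀ k, useq (k + 1) = ‖vseq k‖⁻¹ • vseq k) →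
      ∀ k, J (useq (k + 1)) ≤ J (useq k)) := by
  refine ⟨fun u _ hu hu_pos hu_top α hα hαu v hv => ?_,
    fun useq vseq αseq _ hu _ hu_top hα _ hv hnext k => ?_⟩
  · rw [hu, one_pow, div_one]
    exact ⟨hv.ne_zero hconv hhom hα hαu, hv.energy_le hconv hhom hα hu hu_top,
      hv.energy_eq_iff hconv hhom hα hαu hu hu_pos hu_top⟩
  · rw [hnext k]
    exact (hv k).energy_le hconv hhom (hα k) (hu k) (hu_top k)

/-- **Energy decrease of the proximal power method.**
Let `J` be proper, convex, lsc, absolutely one-homogeneous, `u ∈ N(J)^⊥` with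
`‖u‖ = 1`, `0 < J u < ∞`, let `0 < α < J_*(u)` and `v = prox_α^J(u)`. Then
`v ≠ 0` and the renormalized vector `u⁺ = v/‖v‖` satisfies `J(u⁺) ≤ J(u)`, with
equality iff `λ • u ∈ ∂J(u)` for `λ = J(u)/‖u‖² = J(u)`. In particular, along
the proximal power method `u^{k+1} = prox_{α(u^k)}^J(u^k)/‖prox_{α(u^k)}^J(u^k)‖`
with `α(u^k) < J_*(u^k)` the energy `J(u^{k+1}) ≤ J(u^k)` decreases. -/
theorem energy_decrease_of_proximal_power_method
    (J : H → EReal) (hproper : ProperFn J) (hconv : ConvexFn J)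
    (hlsc : LowerSemicontinuous J) (hhom : AbsOneHom J) :
    (∀ (u : H), InNullPerp J u → ‖u‖ = 1 → 0 < J u → J u ≠ ⊤ →
      ∀ (α : ℝ), 0 < α → (α : EReal) < Jdual J u →
      ∀ (v : H), IsProxPt J α u v →
        v ≠ 0 ∧ J (‖v‖⁻¹ • v) ≤ J u ∧
        (J (‖v‖⁻¹ • v) = J u ↔ InSubdiff J u (((J u).toReal / ‖u‖ ^ 2) • u))) ∧
    (∀ (useq vseq : ℕ → H) (αseq : ℕ → ℝ),
      (∀ k, InNullPerp J (useq k)) → (∀ k, ‖useq k‖ = 1) →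
      (∀ k, 0 < J (useq k)) → (∀ k, J (useq k) ≠ ⊤) →
      (∀ k, 0 < αseq k) → (∀ k, (αseq k : EReal) < Jdual J (useq k)) →
      (∀ k, IsProxPt J (αseq k) (useq k) (vseq k)) →
      (∀ k, useq (k + 1) = ‖vseq k‖⁻¹ • vseq k) →
      ∀ k, J (useq (k + 1)) ≤ J (useq k)) :=
  energy_decrease_of_proximal_power_method_general J hconv hhom

end
end

section
/- Let H be a real Hilbert space and J : H → ℝ ∪ {+∞} be a proper, convex, lower semi-continuous, absolutely one-homogeneous functional satisfying a Poincaré inequality: there exists c_P > 0 with c_P ‖u‖ ≤ J(u) for all u ∈ N(J)^⊥. Let (u^k), (v^k) be generated by the proximal power method u⁰ = f/‖f‖ with f ∈ N(J)^⊥, f ≠ 0, v^k = prox_{α(u^k)}^J(u^k), u^{k+1} = v^k/‖v^k‖, where the parameters satisfy 0 < α(u^k) ≤ c/J(u^k) for a fixed c ∈ (0,1) and α(u^k) < J_*(u^k), and assume sup_k ‖v^k‖ < ∞. Then the nonnegative terms a_k := ‖v^k‖ − ⟨v^k, u^k⟩ are summable: ∑_{k=0}^∞ (‖v^k‖ − ⟨v^k,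 u^k⟩) < ∞; in particular ‖v^k‖ − ⟨v^k, u^k⟩ → 0 as k → ∞. -/
open scoped RealInnerProductSpace

noncomputable section

variable {H : Type*} [NormedAddCommGroup H] [InnerProductSpace ℝ H] [CompleteSpace H]

/-!
Write `λ_k = J(u^k)`. Testing the prox problem defining `v^k` against the competitor
`‖v^k‖ u^k`, which has the same norm as `v^k`, and using `J(v^k) = ‖v^k‖ λ_{k+1}` gives
`‖v^k‖ - ⟪v^k, u^k⟫ ≤ α(u^k) ‖v^k‖ (λ_k - λ_{k+1})`.
The left side is nonnegative because `‖u^k‖ = 1`, so `λ_k` decreases. Since the prox step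
preserves orthogonality to `N(J)`, the Poincaré inequality bounds `λ_k` below by `c_P`, hence
`α(u^k) ≤ c / c_P`, and the partial sums telescope to at most `(c / c_P) (sup_k ‖v^k‖) λ_0`.
-/

lemma EReal.exists_eq_coe_of_pos_div {a x : EReal} (h : 0 < a / x) : ∃ r : ℝ, x = r := by
  induction x using EReal.rec with
  | bot => simp at h
  | coe r => exact ⟨r, rfl⟩
  | top => simp at h

lemma summable_of_le_mul_sub_succ {a b lam : ℕ → ℝ} {C L : ℝ} (ha : ∀ k, 0 ≤ a k)
    (hb : ∀ k, 0 < b k) (hbC : ∀ k, b k ≤ C) (hL : ∀ k, L ≤ lam k)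
    (h : ∀ k, a k ≤ b k * (lam k - lam (k + 1))) : Summable a := by
  have hanti : ∀ k, 0 ≤ lam k - lam (k + 1) := fun k =>
    nonneg_of_mul_nonneg_right ((ha k).trans (h k)) (hb k)
  refine summable_of_sum_range_le ha (c := C * (lam 0 - L)) fun n => ?_
  calc ∑ i ∈ Finset.range n, a i
      ≤ ∑ i ∈ Finset.range n, C * (lam i - lam (i + 1)) :=
        Finset.sum_le_sum fun i _ => (h i).trans (mul_le_mul_of_nonneg_right (hbC i) (hanti i))
    _ = C * (lam 0 - lam n) := by rw [← Finset.mul_sum, Finset.sum_range_sub']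
    _ ≤ C * (lam 0 - L) :=
        mul_le_mul_of_nonneg_left (by linarith [hL n]) ((hb 0).le.trans (hbC 0))

section

variable {E : Type*} [NormedAddCommGroup E] {J : E → EReal}

lemma proxObj_eq_coe (α : ℝ) (u : E) {v : E} {r : ℝ} (hv : J v = r) :
    ProxObj J α u v = (((2 : ℝ)⁻¹ * ‖v - u‖ ^ 2 + α * r : ℝ) : EReal) := by
  rw [ProxObj, hv, ← EReal.coe_mul, ← EReal.coe_add]

variable [InnerProductSpace ℝ E]

lemma AbsOneHom.apply_smul_of_nonneg_s12 (hhom : AbsOneHom J) {t r : ℝ} (ht : 0 ≤ t) {u : E}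
    (hu : J u = r) : J (t • u) = ((t * r : ℝ) : EReal) := by
  rcases ht.eq_or_lt with rfl | ht
  · simp [hhom.1]
  · rw [hhom.2 t ht.ne' u, hu, abs_of_pos ht, EReal.coe_mul]

lemma InNullPerp.smul {u : E} (hu : InNullPerp J u) (a : ℝ) : InNullPerp J (a • u) :=
  fun n hn => by rw [real_inner_smul_left, hu n hn, mul_zero]

lemma ConvexFn.apply_add_smul_le_of_null (hconv : ConvexFn J) (hhom : AbsOneHom J)
    {v n : E} {r : ℝ} (hv : J v = r) (hn : J n = 0) (s : ℝ) : J (v + s • n) ≤ r := by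
  have h2n : J ((2 * s) • n) = 0 := by
    rcases eq_or_ne (2 * s) 0 with hs | hs
    · rw [hs, zero_smul, hhom.1]
    · rw [hhom.2 _ hs n, hn, mul_zero]
  have hmid := hconv ((2 : ℝ) • v) ((2 * s) • n) (1 / 2) (by norm_num) (by norm_num)
  rw [show (1 / 2 : ℝ) • ((2 : ℝ) • v) + (1 - 1 / 2 : ℝ) • ((2 * s) • n) = v + s • n by module,
    hhom.apply_smul_of_nonneg_s12 zero_le_two hv, h2n, mul_zero, add_zero, ← EReal.coe_mul] at hmid
  exact hmid.trans_eq (congrArg _ (by ring))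

lemma IsProxPt.inNullPerp (hconv : ConvexFn J) (hhom : AbsOneHom J) {α : ℝ} (hα : 0 ≤ α)
    {u v : E} (hprox : IsProxPt J α u v) {r : ℝ} (hv : J v = r) (hu : InNullPerp J u) :
    InNullPerp J v := by
  intro n hn
  -- `J` does not increase along the line `v + ℝ n`, so `v` is the point of it closest to `u`
  have hline : ∀ s : ℝ, 0 ≤ ‖n‖ ^ 2 * (s * s) + 2 * ⟪v - u, n⟫ * s + 0 := by
    intro s
    have h : ProxObj J α u v ≤ (((2 : ℝ)⁻¹ * ‖v + s • n - u‖ ^ 2 + α * r : ℝ) : EReal) := by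
      refine (hprox (v + s • n)).trans ?_
      rw [ProxObj, EReal.coe_add, EReal.coe_mul α r]
      exact add_le_add le_rfl (mul_le_mul_of_nonneg_left
        (hconv.apply_add_smul_le_of_null hhom hv hn s) (EReal.coe_nonneg.2 hα))
    rw [proxObj_eq_coe α u hv, EReal.coe_le_coe_iff,
      show v + s • n - u = (v - u) + s • n by abel, norm_add_sq_real, real_inner_smul_right,
      norm_smul, Real.norm_eq_abs, mul_pow, sq_abs] at h
    linarith
  have hdisc := discrim_le_zero hline
  rw [discrim] at hdisc
  have hvu : ⟪v - u, n⟫ = 0 := by nlinarith [sq_nonneg ⟪v - u, n⟫]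
  rwa [inner_sub_left, hu n hn, sub_zero] at hvu

lemma exists_mul_lt_inner_of_lt_jdual {α : ℝ} (hα : 0 ≤ α) {u : E}
    (h : (α : EReal) < Jdual J u) : ∃ p : E, ∃ r : ℝ, J p = r ∧ α * r < ⟪u, p⟫ := by
  obtain ⟨⟨p, _, hpos⟩, hp⟩ := lt_iSup_iff.1 h
  change (α : EReal) < ((⟪u, p⟫ : ℝ) : EReal) / J p at hp
  obtain ⟨r, hr⟩ := EReal.exists_eq_coe_of_pos_div ((EReal.coe_nonneg.2 hα).trans_lt hp)
  rw [hr, EReal.coe_pos] at hpos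
  rw [hr, ← EReal.coe_div, EReal.coe_lt_coe_iff, lt_div_iff₀ hpos] at hp
  exact ⟨p, r, hr, hp⟩

lemma IsProxPt.inner_le_of_zero (hhom : AbsOneHom J) {α : ℝ} {u : E} (h0 : IsProxPt J α u 0)
    {p : E} {r : ℝ} (hp : J p = r) : ⟪u, p⟫ ≤ α * r := by
  refine le_of_forall_pos_le_add fun ε hε => ?_
  set t := ε / (‖p‖ ^ 2 + 1)
  have ht : 0 < t := by positivity
  have htp : t * ‖p‖ ^ 2 ≤ ε := by
    rw [div_mul_eq_mul_div, div_le_iff₀ (by positivity)]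
    nlinarith
  have h := h0 (t • p)
  rw [proxObj_eq_coe α u (r := 0) hhom.1, proxObj_eq_coe α u (hhom.apply_smul_of_nonneg_s12 ht.le hp),
    EReal.coe_le_coe_iff, zero_sub, norm_neg, norm_sub_sq_real, real_inner_smul_left, norm_smul,
    Real.norm_eq_abs, mul_pow, sq_abs, real_inner_comm] at h
  have hscaled : t * ⟪u, p⟫ ≤ t * (α * r + t * ‖p‖ ^ 2 / 2) := by linarith
  linarith [le_of_mul_le_mul_left hscaled ht]

lemma IsProxPt.ne_zero_s12 (hhom : AbsOneHom J) {α : ℝ} (hα : 0 ≤ α) {u v : E}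
    (hprox : IsProxPt J α u v) (hlt : (α : EReal) < Jdual J u) : v ≠ 0 := by
  rintro rfl
  obtain ⟨p, r, hp, hlt⟩ := exists_mul_lt_inner_of_lt_jdual hα hlt
  exact (hprox.inner_le_of_zero hhom hp).not_gt hlt

lemma IsProxPt.norm_sub_inner_le (hhom : AbsOneHom J) {α : ℝ} {u v : E}
    (hprox : IsProxPt J α u v) (hu : ‖u‖ = 1) {lam mu : ℝ} (hJu : J u = lam)
    (hJv : J v = ((‖v‖ * mu : ℝ) : EReal)) : ‖v‖ - ⟪v, u⟫ ≤ α * ‖v‖ * (lam - mu) := by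
  have h := hprox (‖v‖ • u)
  have hsub : ‖v‖ • u - u = (‖v‖ - 1) • u := by rw [sub_smul, one_smul]
  rw [proxObj_eq_coe α u hJv, proxObj_eq_coe α u (hhom.apply_smul_of_nonneg_s12 (norm_nonneg v) hJu),
    EReal.coe_le_coe_iff, norm_sub_sq_real, hsub, norm_smul, hu, Real.norm_eq_abs,
    mul_one, sq_abs] at h
  linarith

end

theorem collinearity_rate_of_proximal_power_method_general
    (J : H → EReal) (hconv : ConvexFn J) (hhom : AbsOneHom J)
    (cP : ℝ) (hcP : 0 < cP)
    (hpoincare : ∀ u : H, InNullPerp J u → ((cP * ‖u‖ : ℝ) : EReal) ≤ J u)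
    (f : H) (hf : InNullPerp J f) (hf0 : f ≠ 0)
    (c : ℝ) (hc0 : 0 < c)
    (useq vseq : ℕ → H) (αseq : ℕ → ℝ)
    (hinit : useq 0 = ‖f‖⁻¹ • f)
    (hαpos : ∀ k, 0 < αseq k)
    (hαle : ∀ k, (αseq k : EReal) ≤ (c : EReal) / J (useq k))
    (hαlt : ∀ k, (αseq k : EReal) < Jdual J (useq k))
    (hv : ∀ k, IsProxPt J (αseq k) (useq k) (vseq k))
    (hstep : ∀ k, useq (k + 1) = ‖vseq k‖⁻¹ • vseq k)
    (hbdd : ∃ M : ℝ, ∀ k, ‖vseq k‖ ≤ M) :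
    (∀ k, 0 ≤ ‖vseq k‖ - ⟪vseq k, useq k⟫) ∧
    Summable (fun k => ‖vseq k‖ - ⟪vseq k, useq k⟫) ∧
    Filter.Tendsto (fun k => ‖vseq k‖ - ⟪vseq k, useq k⟫) Filter.atTop (nhds 0) := by
  obtain ⟨M, hM⟩ := hbdd
  choose lam hlam using fun k =>
    EReal.exists_eq_coe_of_pos_div ((EReal.coe_pos.2 (hαpos k)).trans_le (hαle k))
  have hvne : ∀ k, vseq k ≠ 0 := fun k => (hv k).ne_zero_s12 hhom (hαpos k).le (hαlt k)
  have hJv : ∀ k, J (vseq k) = ((‖vseq k‖ * lam (k + 1) : ℝ) : EReal) := fun k => by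
    have hvk : vseq k = ‖vseq k‖ • useq (k + 1) := by
      rw [hstep k, smul_smul, mul_inv_cancel₀ (norm_ne_zero_iff.2 (hvne k)), one_smul]
    exact (congrArg J hvk).trans (hhom.apply_smul_of_nonneg_s12 (norm_nonneg _) (hlam (k + 1)))
  have hunit : ∀ k, ‖useq k‖ = 1 ∧ InNullPerp J (useq k) := by
    intro k
    induction k with
    | zero => exact hinit ▸ ⟨norm_smul_inv_norm hf0, hf.smul _⟩
    | succ k ih =>
      exact (hstep k) ▸ ⟨norm_smul_inv_norm (hvne k),
        ((hv k).inNullPerp hconv hhom (hαpos k).le (hJv k) ih.2).smul _⟩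
  have hlam_ge : ∀ k, cP ≤ lam k := fun k => by
    simpa [(hunit k).1, hlam k] using hpoincare _ (hunit k).2
  have hα_le : ∀ k, αseq k ≤ c / cP := fun k => by
    have h := hαle k
    rw [hlam k, ← EReal.coe_div, EReal.coe_le_coe_iff] at h
    exact h.trans (div_le_div_of_nonneg_left hc0.le hcP (hlam_ge k))
  have hnonneg : ∀ k, 0 ≤ ‖vseq k‖ - ⟪vseq k, useq k⟫ := fun k =>
    sub_nonneg.2 (by simpa [(hunit k).1] using real_inner_le_norm (vseq k) (useq k))
  have hsum : Summable (fun k => ‖vseq k‖ - ⟪vseq k, useq k⟫) :=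
    summable_of_le_mul_sub_succ hnonneg (fun k => mul_pos (hαpos k) (norm_pos_iff.2 (hvne k)))
      (fun k => mul_le_mul (hα_le k) (hM k) (norm_nonneg _) (div_nonneg hc0.le hcP.le)) hlam_ge
      (fun k => (hv k).norm_sub_inner_le hhom (hunit k).1 (hlam k) (hJv k))
  exact ⟨hnonneg, hsum, hsum.tendsto_atTop_zero⟩

/-- **Rate of asymptotic collinearity of the proximal power method.**
Let `J` be proper, convex, lsc, absolutely one-homogeneous, satisfying a
Poincaré inequality `c_P ‖u‖ ≤ J(u)` on `N(J)^⊥`. Let `(u^k), (v^k)` be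
generated by the proximal power method starting from `f ∈ N(J)^⊥ \ {0}` with
parameters `0 < α(u^k) ≤ c / J(u^k)` (`c ∈ (0,1)`) and `α(u^k) < J_*(u^k)`, and
assume `sup_k ‖v^k‖ < ∞`. Then the nonnegative terms `‖v^k‖ - ⟪v^k, u^k⟫` are
summable; in particular they tend to `0`. -/
theorem collinearity_rate_of_proximal_power_method
    (J : H → EReal) (hproper : ProperFn J) (hconv : ConvexFn J)
    (hlsc : LowerSemicontinuous J) (hhom : AbsOneHom J)
    (cP : ℝ) (hcP : 0 < cP)
    (hpoincare : ∀ u : H, InNullPerp J u → ((cP * ‖u‖ : ℝ) : EReal) ≤ J u)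
    (f : H) (hf : InNullPerp J f) (hf0 : f ≠ 0)
    (c : ℝ) (hc0 : 0 < c) (hc1 : c < 1)
    (useq vseq : ℕ → H) (αseq : ℕ → ℝ)
    (hinit : useq 0 = ‖f‖⁻¹ • f)
    (hαpos : ∀ k, 0 < αseq k)
    (hαle : ∀ k, (αseq k : EReal) ≤ (c : EReal) / J (useq k))
    (hαlt : ∀ k, (αseq k : EReal) < Jdual J (useq k))
    (hv : ∀ k, IsProxPt J (αseq k) (useq k) (vseq k))
    (hstep : ∀ k, useq (k + 1) = ‖vseq k‖⁻¹ • vseq k)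
    (hbdd : ∃ M : ℝ, ∀ k, ‖vseq k‖ ≤ M) :
    (∀ k, 0 ≤ ‖vseq k‖ - ⟪vseq k, useq k⟫) ∧
    Summable (fun k => ‖vseq k‖ - ⟪vseq k, useq k⟫) ∧
    Filter.Tendsto (fun k => ‖vseq k‖ - ⟪vseq k, useq k⟫) Filter.atTop (nhds 0) :=
  collinearity_rate_of_proximal_power_method_general J hconv hhom cP hcP hpoincare f hf hf0 c hc0
    useq vseq αseq hinit hαpos hαle hαlt hv hstep hbdd
end
end
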